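/- (Lemma 1 of the paper) For any real ζ ≤ 1, any nonnegative a₁,…,aₙ, and any two vectors p¹, p² with positive entries, with V(p) = Σᵢ aᵢ/pᵢ and ∇ᵢV(p) = −aᵢ/pᵢ², we have (1−2ζ)·V(p¹) − (1−ζ)·V(p²) ≤ ⟨p¹ − p², ∇V(p¹)⟩ + ζ·⟨p², ∇V(p¹)⟩. -/

import Mathlib

theorem one_sub_two_mul_div_sub_one_sub_mul_div_le {ζ a x y : ℝ} (hζ : ζ ≤ 1) (ha : 0 ≤ a)
    (hx : x ≠ 0) (hy : 0 < y) :
    (1 - 2 * ζ) * (a / x) - (1 - ζ) * (a / y) ≤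
      (x - y) * (-a / x ^ 2) + ζ * (y * (-a / x ^ 2)) := by
  have gap : (x - y) * (-a / x ^ 2) + ζ * (y * (-a / x ^ 2))
      - ((1 - 2 * ζ) * (a / x) - (1 - ζ) * (a / y)) = (1 - ζ) * a * (x - y) ^ 2 / (x ^ 2 * y) := by
    field_simp
    ring
  have : 0 ≤ (1 - ζ) * a * (x - y) ^ 2 / (x ^ 2 * y) := by
    have : 0 ≤ 1 - ζ := sub_nonneg.mpr hζ
    positivity
  linarith

theorem stmt_6_general (n : ℕ) (a : Fin n → ℝ) (ha : ∀ i, 0 ≤ a i)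
    (ζ : ℝ) (hζ : ζ ≤ 1)
    (p1 p2 : Fin n → ℝ) (hp1 : ∀ i, 0 < p1 i) (hp2 : ∀ i, 0 < p2 i) :
    (1 - 2 * ζ) * (∑ i, a i / p1 i) - (1 - ζ) * (∑ i, a i / p2 i)
      ≤ ∑ i, (p1 i - p2 i) * (-(a i) / (p1 i) ^ 2)
        + ζ * ∑ i, p2 i * (-(a i) / (p1 i) ^ 2) := by
  simp only [Finset.mul_sum, ← Finset.sum_sub_distrib, ← Finset.sum_add_distrib]
  exact Finset.sum_le_sum fun i _ =>
    one_sub_two_mul_div_sub_one_sub_mul_div_le hζ (ha i) (hp1 i).ne' (hp2 i)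

/-- Lemma 1 of the paper: for `ζ ≤ 1`, `V(p) = Σᵢ aᵢ/pᵢ`, `∇ᵢV(p) = −aᵢ/pᵢ²`,
`(1−2ζ)V(p¹) − (1−ζ)V(p²) ≤ ⟨p¹ − p², ∇V(p¹)⟩ + ζ⟨p², ∇V(p¹)⟩`. -/
theorem stmt_6 (n : ℕ) (hn : 1 ≤ n) (a : Fin n → ℝ) (ha : ∀ i, 0 ≤ a i)
    (ζ : ℝ) (hζ : ζ ≤ 1)
    (p1 p2 : Fin n → ℝ) (hp1 : ∀ i, 0 < p1 i) (hp2 : ∀ i, 0 < p2 i) :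
    (1 - 2 * ζ) * (∑ i, a i / p1 i) - (1 - ζ) * (∑ i, a i / p2 i)
      ≤ ∑ i, (p1 i - p2 i) * (-(a i) / (p1 i) ^ 2)
        + ζ * ∑ i, p2 i * (-(a i) / (p1 i) ^ 2) :=
  stmt_6_general n a ha ζ hζ p1 p2 hp1 hp2
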